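/- For every integer n ≥ 2, the polynomial p_n(x) = x^{2n} - 2(x + x^2 + ... + x^{2n-1}) + 1 has exactly one root of absolute value strictly greater than 1 (counted with multiplicity), and that root is real and greater than 1. -/

import Mathlib

/-!
Multiplying by `X - 1` turns `p_n` into `q_n = X^(2n+1) - 3 X^(2n) + 3 X - 1`, whose roots
are stable under `z ↦ z⁻¹`. On the unit circle, `q_n(e^{2iφ}) = 2i e^{i(2n+1)φ} h(φ)` with
the real function `h(φ) = sin((2n+1)φ) - 3 sin((2n-1)φ)`, which alternates in sign at the
points `jπ/(2n+1)`, `1 ≤ j ≤ n`. This yields `n - 1` zeros in `(0, π/2)`, and since `h` is odd,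
`2n - 2` distinct roots `e^{2iφ} ≠ 1` of `p_n` on the unit circle. By the intermediate value
theorem on `[1, 3]`, `p_n` has a real root `r > 1`, and `r⁻¹` is a root as well. These `2n`
roots exhaust the roots of `p_n`, and only `r` lies outside the closed unit disc.
-/

open Polynomial Complex Set Real

section SignChanges

variable {α : Type*} [ConditionallyCompleteLinearOrder α] [TopologicalSpace α] [OrderTopology α]
  [DenselyOrdered α]

theorem exists_mem_Ioo_eq_zero_of_mul_neg {f : α → ℝ} {a b : α} (hab : a ≤ b)
    (hf : ContinuousOn f (Icc a b)) (h : f a * f b < 0) : ∃ x ∈ Ioo a b, f x = 0 := by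
  rcases mul_neg_iff.mp h with ⟨ha, hb⟩ | ⟨ha, hb⟩
  · exact intermediate_value_Ioo' hab hf ⟨hb, ha⟩
  · exact intermediate_value_Ioo hab hf ⟨ha, hb⟩

theorem exists_finset_card_eq_zeros_of_sign_changes {f : α → ℝ} {t : ℕ → α}
    (ht : StrictMono t) (m : ℕ) (hf : ContinuousOn f (Icc (t 0) (t m)))
    (hsign : ∀ k < m, f (t k) * f (t (k + 1)) < 0) :
    ∃ Z : Finset α, Z.card = m ∧ ∀ x ∈ Z, x ∈ Ioo (t 0) (t m) ∧ f x = 0 := by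
  induction m with
  | zero => exact ⟨∅, rfl, by simp⟩
  | succ m ih =>
    have htm : t m < t (m + 1) := ht m.lt_succ_self
    have ht0 : t 0 ≤ t m := ht.monotone m.zero_le
    obtain ⟨Z, hcard, hZ⟩ := ih (hf.mono (Icc_subset_Icc_right htm.le))
      fun k hk => hsign k (by omega)
    obtain ⟨x, hx, hfx⟩ := exists_mem_Ioo_eq_zero_of_mul_neg htm.le
      (hf.mono (Icc_subset_Icc_left ht0)) (hsign m m.lt_succ_self)
    have hxZ : x ∉ Z := fun h => (hZ x h).1.2.not_gt hx.1
    refine ⟨insert x Z, by rw [Finset.card_insert_of_notMem hxZ, hcard], fun y hy => ?_⟩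
    rcases Finset.mem_insert.mp hy with rfl | hy
    · exact ⟨⟨ht0.trans_lt hx.1, hx.2⟩, hfx⟩
    · obtain ⟨⟨h0, hm⟩, hfy⟩ := hZ y hy
      exact ⟨⟨h0, hm.trans htm⟩, hfy⟩

end SignChanges

theorem Polynomial.roots_filter_eq_singleton {R : Type*} [CommRing R] [IsDomain R]
    {P : R[X]} (hP : P ≠ 0) (r : R → Prop) [DecidablePred r] {a : R} (ha : P.IsRoot a)
    (hra : r a) {s : Finset R} (hs : ∀ z ∈ s, P.IsRoot z ∧ ¬r z)
    (hdeg : P.natDegree ≤ s.card + 1) :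
    P.roots.filter r = {a} := by
  have has : a ∉ s := fun h => (hs a h).2 hra
  have hle : a ::ₘ s.val ≤ P.roots := by
    refine (Multiset.le_iff_subset (Multiset.nodup_cons.mpr ⟨has, s.nodup⟩)).mpr fun z hz => ?_
    rcases Multiset.mem_cons.mp hz with rfl | hz
    · exact (mem_roots hP).mpr ha
    · exact (mem_roots hP).mpr (hs z hz).1
  have hroots : P.roots = a ::ₘ s.val := (Multiset.eq_of_le_of_card_le hle
    ((card_roots' P).trans (by simpa using hdeg))).symm
  rw [hroots, Multiset.filter_cons_of_pos _ hra,
    Multiset.filter_eq_nil.mpr fun z hz => (hs z hz).2]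
  rfl

theorem Polynomial.isRoot_map_int_iff {A : Type*} [CommRing A] (P : ℤ[X]) (z : A) :
    (P.map (Int.castRingHom A)).IsRoot z ↔ aeval z P = 0 := by
  rw [IsRoot, ← algebraMap_int_eq, eval_map_algebraMap]

lemma Complex.two_mul_I_mul_sin_nat_mul (k : ℕ) (φ : ℝ) :
    2 * I * (Real.sin (k * φ) : ℂ) = cexp (φ * I) ^ k - cexp (-φ * I) ^ k := by
  have h := two_sin ((k * φ : ℝ) : ℂ)
  rw [← Complex.exp_nat_mul, ← Complex.exp_nat_mul, ofReal_sin]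
  push_cast at h ⊢
  rw [show (k : ℂ) * (φ * I) = k * φ * I by ring, show (k : ℂ) * (-φ * I) = -(k * φ) * I by ring]
  linear_combination I * h + (cexp (-(k * φ) * I) - cexp (k * φ * I)) * I_sq

lemma Complex.injOn_exp_two_mul_mul_I :
    InjOn (fun φ : ℝ => cexp (2 * φ * I)) (Ioo (-(π / 2)) (π / 2)) := by
  intro a ha b hb h
  have := Circle.exp_injOn_Ioc (show π - -π ≤ 2 * π by linarith)
    (show 2 * a ∈ Ioc (-π) π from ⟨by linarith [ha.1], by linarith [ha.2]⟩)
    (show 2 * b ∈ Ioc (-π) π from ⟨by linarith [hb.1], by linarith [hb.2]⟩)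
    (Subtype.ext (by simpa [Circle.coe_exp] using h))
  linarith

namespace LargeRoot

noncomputable def p (n : ℕ) : ℤ[X] :=
  X ^ (2 * n) - 2 * ∑ j ∈ Finset.Icc 1 (2 * n - 1), X ^ j + 1

noncomputable def q (n : ℕ) : ℤ[X] := X ^ (2 * n + 1) - 3 * X ^ (2 * n) + 3 * X - 1

noncomputable def circleFactor (n : ℕ) (φ : ℝ) : ℝ :=
  Real.sin ((2 * n + 1) * φ) - 3 * Real.sin ((2 * n - 1) * φ)

variable {n : ℕ}

lemma X_sub_one_mul_p (hn : n ≠ 0) : (X - 1) * p n = q n := by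
  have hgeom := geom_sum_Ico_mul (X : ℤ[X]) (show 1 ≤ 2 * n by omega)
  rw [show 2 * n = 2 * n - 1 + 1 by omega, Finset.Ico_add_one_right_eq_Icc,
    ← show 2 * n = 2 * n - 1 + 1 by omega] at hgeom
  rw [p, q]
  linear_combination (-2 : ℤ[X]) * hgeom

lemma monic_q (hn : n ≠ 0) : (q n).Monic := by
  unfold q; monicity!

lemma natDegree_q (hn : n ≠ 0) : (q n).natDegree = 2 * n + 1 := by
  unfold q; compute_degree!; simp [hn]

lemma monic_p (hn : n ≠ 0) : (p n).Monic :=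
  (monic_X_sub_C 1).of_mul_monic_left (by simpa [X_sub_one_mul_p hn] using monic_q hn)

lemma natDegree_p (hn : n ≠ 0) : (p n).natDegree = 2 * n := by
  have h := (monic_X_sub_C (1 : ℤ)).natDegree_mul (monic_p hn)
  rw [natDegree_X_sub_C, C_1, X_sub_one_mul_p hn, natDegree_q hn] at h
  omega

lemma aeval_q {R : Type*} [CommRing R] (x : R) :
    aeval x (q n) = x ^ (2 * n + 1) - 3 * x ^ (2 * n) + 3 * x - 1 := by
  simp [q, map_ofNat]

lemma aeval_p_eq_zero_iff {R : Type*} [CommRing R] [IsDomain R] (hn : n ≠ 0) {x : R}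
    (hx : x ≠ 1) : aeval x (p n) = 0 ↔ aeval x (q n) = 0 := by
  rw [← X_sub_one_mul_p hn, map_mul, mul_eq_zero, map_sub, aeval_X, map_one, sub_eq_zero]
  simp [hx]

lemma pow_mul_aeval_inv_q {K : Type*} [Field K] {x : K} (hx : x ≠ 0) :
    x ^ (2 * n + 1) * aeval x⁻¹ (q n) = -aeval x (q n) := by
  have h : x ^ (2 * n) * x⁻¹ ^ (2 * n) = 1 := by rw [← mul_pow, mul_inv_cancel₀ hx, one_pow]
  have h' : x * x⁻¹ = 1 := mul_inv_cancel₀ hx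
  rw [aeval_q, aeval_q]
  linear_combination (x * x⁻¹ - 3 * x) * h + (1 + 3 * x ^ (2 * n)) * h'

lemma aeval_inv_p_eq_zero {K : Type*} [Field K] (hn : n ≠ 0) {x : K} (hx0 : x ≠ 0)
    (hx1 : x ≠ 1) (h : aeval x (p n) = 0) : aeval x⁻¹ (p n) = 0 := by
  rw [aeval_p_eq_zero_iff hn hx1] at h
  rw [aeval_p_eq_zero_iff hn (inv_ne_one.mpr hx1)]
  simpa [h, hx0] using pow_mul_aeval_inv_q (n := n) hx0

lemma exists_real_root (hn : 2 ≤ n) : ∃ r : ℝ, 1 < r ∧ aeval r (p n) = 0 := by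
  have hp1 : aeval (1 : ℝ) (p n) < 0 := by
    have : (2 : ℝ) ≤ n := by exact_mod_cast hn
    simp [p, map_ofNat, Nat.cast_sub (show 1 ≤ 2 * n by omega)]
    linarith
  have hp3 : aeval (3 : ℝ) (p n) = 4 := by
    have h := congrArg (aeval (3 : ℝ)) (X_sub_one_mul_p (show n ≠ 0 by omega))
    rw [map_mul, aeval_q] at h
    simp only [map_sub, aeval_X, map_one] at h
    rw [pow_succ] at h
    linarith
  obtain ⟨r, hr, hr0⟩ := intermediate_value_Ioo (by norm_num : (1 : ℝ) ≤ 3)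
    (Polynomial.continuous_aeval (p n)).continuousOn ⟨hp1, by rw [hp3]; norm_num⟩
  exact ⟨r, hr.1, hr0⟩

lemma aeval_exp_q (hn : n ≠ 0) (φ : ℝ) :
    aeval (cexp (2 * φ * I)) (q n) = 2 * I * cexp (φ * I) ^ (2 * n + 1) * circleFactor n φ := by
  obtain ⟨N, hN⟩ : ∃ N, 2 * n = N + 1 := ⟨2 * n - 1, by omega⟩
  have hplus : (2 * n + 1 : ℝ) = (N + 2 : ℕ) := by
    push_cast; exact_mod_cast congrArg (· + 1) hN
  have hminus : (2 * n - 1 : ℝ) = (N : ℕ) := by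
    have : (2 * n : ℝ) = N + 1 := by exact_mod_cast hN
    linarith
  have hsq : cexp (2 * φ * I) = cexp (φ * I) ^ 2 := by
    rw [← Complex.exp_nat_mul]; push_cast; ring_nf
  have hwv : cexp (φ * I) * cexp (-φ * I) = 1 := by rw [← Complex.exp_add]; simp
  have hAB : cexp (φ * I) ^ N * cexp (-φ * I) ^ N = 1 := by rw [← mul_pow, hwv, one_pow]
  have hs1 := two_mul_I_mul_sin_nat_mul (N + 2) φ
  have hs2 := two_mul_I_mul_sin_nat_mul N φ
  rw [aeval_q, circleFactor, hplus, hminus, hsq, hN]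
  push_cast at hs1 hs2 ⊢
  set w := cexp (φ * I)
  set v := cexp (-φ * I)
  linear_combination (-w ^ (N + 2)) * hs1 + 3 * w ^ (N + 2) * hs2 +
    (w ^ 2 * v ^ 2 - 3 * w ^ 2) * hAB + (w * v + 1) * hwv

lemma circleFactor_neg (φ : ℝ) : circleFactor n (-φ) = -circleFactor n φ := by
  simp only [circleFactor, mul_neg, Real.sin_neg]; ring

lemma circleFactor_nat_mul_pi_div (j : ℕ) :
    circleFactor n (j * π / (2 * n + 1)) =
      3 * (-1) ^ j * Real.sin (2 * j * π / (2 * n + 1)) := by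
  have hpos : (0 : ℝ) < 2 * n + 1 := by positivity
  have h1 : (2 * n + 1) * (j * π / (2 * n + 1)) = j * π := by field_simp
  have h2 : (2 * n - 1) * (j * π / (2 * n + 1)) = j * π - 2 * j * π / (2 * n + 1) := by
    field_simp; ring
  rw [circleFactor, h1, h2, Real.sin_nat_mul_pi, Real.sin_nat_mul_pi_sub]
  ring

lemma circleFactor_mul_neg {j : ℕ} (hj : 0 < j) (hjn : j < n) :
    circleFactor n (j * π / (2 * n + 1)) *
      circleFactor n ((j + 1 : ℕ) * π / (2 * n + 1)) < 0 := by
  have hsin_pos : ∀ i : ℕ, 0 < i → i ≤ n → 0 < Real.sin (2 * i * π / (2 * n + 1)) := by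
    intro i hi0 hin
    have : (i : ℝ) ≤ n := by exact_mod_cast hin
    have : (0 : ℝ) < i := by exact_mod_cast hi0
    apply Real.sin_pos_of_pos_of_lt_pi (by positivity)
    rw [div_lt_iff₀ (by positivity)]
    nlinarith [Real.pi_pos]
  have hprod := mul_pos (hsin_pos j hj hjn.le) (hsin_pos (j + 1) j.succ_pos hjn)
  have hsq : ((-1 : ℝ) ^ j) ^ 2 = 1 := by
    rw [← pow_mul, mul_comm, pow_mul, neg_one_sq, one_pow]
  rw [circleFactor_nat_mul_pi_div, circleFactor_nat_mul_pi_div, pow_succ]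
  nlinarith

lemma exists_zeros_circleFactor (hn : n ≠ 0) :
    ∃ Z : Finset ℝ, Z.card = n - 1 ∧ ∀ φ ∈ Z, φ ∈ Ioo 0 (π / 2) ∧ circleFactor n φ = 0 := by
  have hpos : (0 : ℝ) < 2 * n + 1 := by positivity
  set t : ℕ → ℝ := fun k => (k + 1 : ℕ) * π / (2 * n + 1) with ht
  have hmono : StrictMono t := fun a b hab => by simp only [ht]; gcongr
  obtain ⟨Z, hcard, hZ⟩ := exists_finset_card_eq_zeros_of_sign_changes hmono (n - 1)
    (by unfold circleFactor; fun_prop) fun k hk => circleFactor_mul_neg k.succ_pos (by omega)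
  have ht0 : 0 < t 0 := by simp only [ht]; positivity
  have htn : t (n - 1) ≤ π / 2 := by
    simp only [ht]
    rw [div_le_div_iff₀ hpos two_pos, show n - 1 + 1 = n by omega]
    nlinarith [Real.pi_pos]
  exact ⟨Z, hcard, fun φ hφ =>
    ⟨⟨ht0.trans (hZ φ hφ).1.1, (hZ φ hφ).1.2.trans_le htn⟩, (hZ φ hφ).2⟩⟩

lemma exists_unit_circle_roots (hn : n ≠ 0) :
    ∃ C : Finset ℂ, C.card = 2 * (n - 1) ∧ ∀ z ∈ C, ‖z‖ = 1 ∧ aeval z (p n) = 0 := by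
  obtain ⟨Z, hcard, hZ⟩ := exists_zeros_circleFactor hn
  have hdisj : Disjoint Z (Z.image Neg.neg) := by
    rw [Finset.disjoint_left]
    intro φ hφ hφ'
    obtain ⟨ψ, hψ, rfl⟩ := Finset.mem_image.mp hφ'
    linarith [(hZ _ hφ).1.1, (hZ ψ hψ).1.1]
  have hZ' : ∀ φ ∈ Z ∪ Z.image Neg.neg,
      φ ∈ Ioo (-(π / 2)) (π / 2) ∧ φ ≠ 0 ∧ circleFactor n φ = 0 := by
    intro φ hφ
    rcases Finset.mem_union.mp hφ with hφ | hφ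
    · obtain ⟨⟨h0, h1⟩, h⟩ := hZ φ hφ
      exact ⟨⟨by linarith, h1⟩, h0.ne', h⟩
    · obtain ⟨ψ, hψ, rfl⟩ := Finset.mem_image.mp hφ
      obtain ⟨⟨h0, h1⟩, h⟩ := hZ ψ hψ
      exact ⟨⟨by linarith, by linarith⟩, by simpa using h0.ne',
        by rw [circleFactor_neg, h, neg_zero]⟩
  have hinj : InjOn (fun φ : ℝ => cexp (2 * φ * I)) ↑(Z ∪ Z.image Neg.neg) :=
    injOn_exp_two_mul_mul_I.mono fun φ hφ => (hZ' φ hφ).1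
  refine ⟨(Z ∪ Z.image Neg.neg).image fun φ : ℝ => cexp (2 * φ * I), ?_, ?_⟩
  · rw [Finset.card_image_of_injOn hinj, Finset.card_union_of_disjoint hdisj,
      Finset.card_image_of_injective _ neg_injective, hcard]
    ring
  · intro z hz
    obtain ⟨φ, hφ, rfl⟩ := Finset.mem_image.mp hz
    obtain ⟨hφI, hφ0, hφ⟩ := hZ' φ hφ
    refine ⟨by simpa using norm_exp_ofReal_mul_I (2 * φ), ?_⟩
    have hne : cexp (2 * φ * I) ≠ 1 := fun h => hφ0 <|
      injOn_exp_two_mul_mul_I hφI ⟨by linarith [Real.pi_pos], by linarith [Real.pi_pos]⟩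
        (by simpa using h)
    rw [aeval_p_eq_zero_iff hn hne, aeval_exp_q hn, hφ, ofReal_zero, mul_zero]

end LargeRoot

open LargeRoot in
theorem unique_large_root (n : ℕ) (hn : 2 ≤ n) :
    ∃ r : ℝ, 1 < r ∧
      (((X ^ (2 * n) - 2 * ∑ j ∈ Finset.Icc 1 (2 * n - 1), X ^ j + 1 : ℤ[X])).map
          (Int.castRingHom ℂ)).roots.filter (fun z => 1 < ‖z‖) = {(r : ℂ)} := by
  change ∃ r : ℝ, 1 < r ∧ ((p n).map (Int.castRingHom ℂ)).roots.filter (1 < ‖·‖) = {(r : ℂ)}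
  have hn0 : n ≠ 0 := by omega
  obtain ⟨r, hr1, hr⟩ := exists_real_root hn
  obtain ⟨C, hCcard, hC⟩ := exists_unit_circle_roots hn0
  have hrC : aeval (r : ℂ) (p n) = 0 := by
    rw [show (r : ℂ) = algebraMap ℝ ℂ r from rfl, aeval_algebraMap_apply, hr, map_zero]
  have hrinv : aeval (r : ℂ)⁻¹ (p n) = 0 :=
    aeval_inv_p_eq_zero hn0 (by exact_mod_cast (one_pos.trans hr1).ne') (by exact_mod_cast hr1.ne')
      hrC
  have hnorm_r : ‖(r : ℂ)‖ = r := by rw [norm_real, Real.norm_of_nonneg (by linarith)]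
  have hnorm_rinv : ‖(r : ℂ)⁻¹‖ < 1 := by
    rw [norm_inv, hnorm_r]; exact inv_lt_one_of_one_lt₀ hr1
  have hrinvC : (r : ℂ)⁻¹ ∉ C := fun h => by linarith [(hC _ h).1]
  refine ⟨r, hr1, roots_filter_eq_singleton ((monic_p hn0).map _).ne_zero _
    ((isRoot_map_int_iff _ _).mpr hrC) (by rwa [hnorm_r]) (s := insert (r : ℂ)⁻¹ C) ?_ ?_⟩
  · intro z hz
    rw [isRoot_map_int_iff]
    rcases Finset.mem_insert.mp hz with rfl | hz
    · exact ⟨hrinv, hnorm_rinv.not_gt⟩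
    · exact ⟨(hC z hz).2, (hC z hz).1.not_gt⟩
  · rw [(monic_p hn0).natDegree_map, natDegree_p hn0, Finset.card_insert_of_notMem hrinvC,
      hCcard]
    omega
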